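/- Let g(s,t) = exp((t+s)/2)·(exp(t) − 1) on the triangle {(s,t) : 0 ≤ t ≤ s ≤ 1} (the geometric Brownian motion covariance on △). Then g is smooth on △ and its reflection C(s,t) = g(max(s,t), min(s,t)) is continuous on [0,1]² but not differentiable at diagonal points (a,a) with 0 < a < 1. -/

import Mathlib

open Set

/-- The triangle △ = {(s,t) ∈ [0,1]² : 0 ≤ t ≤ s ≤ 1}. -/
def Triangle : Set (ℝ × ℝ) := {p : ℝ × ℝ | 0 ≤ p.2 ∧ p.2 ≤ p.1 ∧ p.1 ≤ 1}

/-- The geometric Brownian motion covariance: g(s,t) = e^{(s+t)/2}(e^t − 1) is smooth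
on the triangle, and its reflection C(s,t) = e^{(s+t)/2}(e^{min(s,t)} − 1) is
continuous on [0,1]² but not (Fréchet) differentiable at any diagonal point (a,a)
with 0 < a < 1. -/
theorem stmt_19 :
    ContDiffOn ℝ (⊤ : ℕ∞)
      (fun p : ℝ × ℝ => Real.exp ((p.1 + p.2) / 2) * (Real.exp p.2 - 1)) Triangle ∧
    ContinuousOn
      (fun p : ℝ × ℝ => Real.exp ((p.1 + p.2) / 2) * (Real.exp (min p.1 p.2) - 1))
      (Icc (0:ℝ) 1 ×ˢ Icc (0:ℝ) 1) ∧
    ∀ a : ℝ, 0 < a → a < 1 →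
      ¬ DifferentiableAt ℝ
        (fun p : ℝ × ℝ => Real.exp ((p.1 + p.2) / 2) * (Real.exp (min p.1 p.2) - 1))
        (a, a) := by
  refine ⟨?_, ?_, ?_⟩
  · exact (((Real.contDiff_exp.comp ((contDiff_fst.add contDiff_snd).div_const 2)).mul
      ((Real.contDiff_exp.comp contDiff_snd).sub contDiff_const))).contDiffOn
  · exact (((Real.continuous_exp.comp ((continuous_fst.add continuous_snd).div_const 2)).mul
      ((Real.continuous_exp.comp (continuous_fst.min continuous_snd)).sub
        continuous_const))).continuousOn
  · intro a _ _ hdiff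
    set f : ℝ × ℝ → ℝ :=
      fun p => Real.exp ((p.1 + p.2) / 2) * (Real.exp (min p.1 p.2) - 1) with hf
    have hline : DifferentiableAt ℝ (fun t : ℝ => (t, a)) a :=
      (DifferentiableAt.prodMk differentiableAt_id (differentiableAt_const a))
    have hd : DifferentiableAt ℝ (f ∘ fun t : ℝ => (t, a)) a :=
      DifferentiableAt.comp (f := fun t : ℝ => (t, a)) a hdiff hline
    set h : ℝ → ℝ := f ∘ fun t : ℝ => (t, a) with hh
    have hda : HasDerivAt h (deriv h a) a := hd.hasDerivAt
    -- derivative of the inner affine map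
    have h1 : HasDerivAt (fun t : ℝ => (t + a) / 2) (1 / 2) a := by
      simpa using ((hasDerivAt_id a).add_const a).div_const 2
    have h2 : HasDerivAt (fun t : ℝ => Real.exp ((t + a) / 2))
        (Real.exp ((a + a) / 2) * (1 / 2)) a :=
      by have := (Real.hasDerivAt_exp ((a + a) / 2)).comp a h1; exact this
    -- F : right branch, G : left branch
    have hF : HasDerivAt (fun t : ℝ => Real.exp ((t + a) / 2) * (Real.exp a - 1))
        (Real.exp ((a + a) / 2) * (1 / 2) * (Real.exp a - 1)) a :=
      h2.mul_const _
    have hG : HasDerivAt (fun t : ℝ => Real.exp ((t + a) / 2) * (Real.exp t - 1))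
        (Real.exp ((a + a) / 2) * (1 / 2) * (Real.exp a - 1)
          + Real.exp ((a + a) / 2) * Real.exp a) a :=
      h2.mul ((Real.hasDerivAt_exp a).sub_const 1)
    have hFeq : ∀ t ∈ Ici a, h t = Real.exp ((t + a) / 2) * (Real.exp a - 1) := by
      intro t ht
      simp only [hh, hf, Function.comp_apply, min_eq_right (mem_Ici.mp ht)]
    have hGeq : ∀ t ∈ Iic a, h t = Real.exp ((t + a) / 2) * (Real.exp t - 1) := by
      intro t ht
      simp only [hh, hf, Function.comp_apply, min_eq_left (mem_Iic.mp ht)]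
    have hmem : a ∈ Ici a := self_mem_Ici
    have hmem' : a ∈ Iic a := self_mem_Iic
    have hFw : HasDerivWithinAt h
        (Real.exp ((a + a) / 2) * (1 / 2) * (Real.exp a - 1)) (Ici a) a :=
      (hF.hasDerivWithinAt).congr hFeq (hFeq a hmem)
    have hGw : HasDerivWithinAt h
        (Real.exp ((a + a) / 2) * (1 / 2) * (Real.exp a - 1)
          + Real.exp ((a + a) / 2) * Real.exp a) (Iic a) a :=
      (hG.hasDerivWithinAt).congr hGeq (hGeq a hmem')
    have e1 : Real.exp ((a + a) / 2) * (1 / 2) * (Real.exp a - 1) = deriv h a := by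
      rw [← hFw.derivWithin (uniqueDiffOn_Ici a a self_mem_Ici),
        (hda.hasDerivWithinAt.derivWithin (uniqueDiffOn_Ici a a self_mem_Ici))]
    have e2 : Real.exp ((a + a) / 2) * (1 / 2) * (Real.exp a - 1)
        + Real.exp ((a + a) / 2) * Real.exp a = deriv h a := by
      rw [← hGw.derivWithin (uniqueDiffOn_Iic a a self_mem_Iic),
        (hda.hasDerivWithinAt.derivWithin (uniqueDiffOn_Iic a a self_mem_Iic))]
    have : Real.exp ((a + a) / 2) * Real.exp a = 0 := by linarith [e1.trans e2.symm]
    have h3 : (0:ℝ) < Real.exp ((a + a) / 2) * Real.exp a :=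
      mul_pos (Real.exp_pos _) (Real.exp_pos _)
    linarith
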